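/- Let (S,d) be a bounded metric space with a self-map g, and {Xⁿ} a dynamical quasi-visual approximation of width w of (S,d), with constants τ, ρ ∈ (0,1) such that diam(Y) ≥ τ^k·diam(X) and diam(Y) ≤ C₀·ρ^k·diam(X) whenever X ∈ Xⁿ, Y ∈ X^{n+k} intersect, and set ν := log(1/ρ)/log(1/τ) ∈ (0,1]. Then for each R > 0 there exists C = C(R) ≥ 1 such that d(gⁿ(x), gⁿ(y)) ≤ C·(d(x,y)/diam(Z^{n+1}))^ν whenever n ∈ ℕ, Z^{n+1} ∈ X^{n+1}, z₀ ∈ Z^{n+1}, and x,y ∈ B(z₀, R·diam(Z^{n+1})). -/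

import Mathlib

/-!
Let `m` be the last level at which `x` and `y` are `U_w`-close. At level `m` they are joined by a
chain of at most `2w + 2` tiles, which `gⁿ` maps onto a chain of level-`(m - n)` tiles, so
`d(gⁿx, gⁿy) ≲ ρ^(m-n)`. At level `m + 1` they are separated, so `d(x, y)` dominates the diameter of
the `(m + 1)`-tile of `x`. Since `d(x, z₀) < R·diam Z`, the last level at which `x` and `z₀` are
close lies at most `N(R)` levels above `n + 1`, which forces the tiles through `x` at level
`n + 1 + s` to have diameter `≳ τ^s·diam Z`. Hence `d(x, y)/diam Z ≳ τ^(m-n)`, and `τ^ν = ρ` turns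
this into the claimed Hölder-type bound.
-/

open Metric Set

variable {S : Type*}

/-- A chain of tiles in a cover `T`: consecutive tiles intersect. -/
def TileChain (T : Set (Set S)) (A B : Set S) (k : ℕ) : Prop :=
  ∃ c : ℕ → Set S, c 0 = A ∧ c k = B ∧ (∀ i, i ≤ k → c i ∈ T) ∧
    ∀ i, i < k → (c i ∩ c (i + 1)).Nonempty

/-- The width-`w` neighborhood `U_w(A)` of a tile `A` in a cover `T`. -/
def Uw (T : Set (Set S)) (w : ℕ) (A : Set S) : Set S :=
  ⋃₀ {B | B ∈ T ∧ ∃ k, k ≤ w ∧ TileChain T A B k}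

/-- The `U_w`-proximity function associated with a sequence of covers. -/
noncomputable def prox (X : ℕ → Set (Set S)) (w : ℕ) (x y : S) : ℕ∞ :=
  ⨆ n ∈ {n : ℕ | ∃ A ∈ X n, ∃ B ∈ X n, x ∈ A ∧ y ∈ B ∧
    (Uw (X n) w A ∩ Uw (X n) w B).Nonempty}, (n : ℕ∞)

/-- `{Xⁿ}` is a quasi-visual approximation of width `w` of the metric space `S`. -/
def IsQVA [MetricSpace S] (X : ℕ → Set (Set S)) (w : ℕ) : Prop :=
  (∀ n, ⋃₀ X n = Set.univ) ∧ X 0 = {Set.univ} ∧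
  (∃ C : ℝ, 1 ≤ C ∧
    (∀ n, ∀ A ∈ X n, ∀ B ∈ X n, (A ∩ B).Nonempty →
      Metric.diam A ≤ C * Metric.diam B) ∧
    (∀ n, ∀ A ∈ X n, ∀ B ∈ X n, Uw (X n) w A ∩ Uw (X n) w B = ∅ →
      ∀ a ∈ A, ∀ b ∈ B, Metric.diam A ≤ C * dist a b) ∧
    (∀ n, ∀ A ∈ X n, ∀ B ∈ X (n + 1), (A ∩ B).Nonempty →
      Metric.diam A ≤ C * Metric.diam B ∧ Metric.diam B ≤ C * Metric.diam A)) ∧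
  (∃ (k₀ : ℕ) (lam : ℝ), 0 < k₀ ∧ 0 < lam ∧ lam < 1 ∧
    ∀ n, ∀ A ∈ X n, ∀ B ∈ X (n + k₀), (A ∩ B).Nonempty →
      Metric.diam B ≤ lam * Metric.diam A)

namespace TileChain

variable {T : Set (Set S)} {A B : Set S} {k : ℕ}

theorem refl (hA : A ∈ T) : TileChain T A A 0 :=
  ⟨fun _ => A, rfl, rfl, fun _ _ => hA, fun _ h => absurd h (Nat.not_lt_zero _)⟩

theorem zero_iff : TileChain T A B 0 ↔ A = B ∧ A ∈ T := by
  constructor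
  · rintro ⟨c, h0, h1, hmem, -⟩
    exact ⟨h0 ▸ h1, h0 ▸ hmem 0 le_rfl⟩
  · rintro ⟨rfl, hA⟩
    exact refl hA

theorem right_mem (h : TileChain T A B k) : B ∈ T := by
  obtain ⟨c, -, hk, hmem, -⟩ := h
  exact hk ▸ hmem k le_rfl

theorem succ_iff : TileChain T A B (k + 1) ↔
    ∃ B', TileChain T A B' k ∧ B ∈ T ∧ (B' ∩ B).Nonempty := by
  constructor
  · rintro ⟨c, h0, hk, hmem, hint⟩
    exact ⟨c k, ⟨c, h0, rfl, fun i hi => hmem i (by omega), fun i hi => hint i (by omega)⟩,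
      hk ▸ hmem _ le_rfl, hk ▸ hint k k.lt_succ_self⟩
  · rintro ⟨B', ⟨c, h0, hk, hmem, hint⟩, hB, hB'B⟩
    refine ⟨Function.update c (k + 1) B, by simp [h0], by simp, fun i hi => ?_, fun i hi => ?_⟩
    · rcases hi.lt_or_eq with hi | rfl
      · rw [Function.update_of_ne (by omega)]
        exact hmem i (by omega)
      · simpa
    · rw [Function.update_of_ne (by omega : i ≠ k + 1)]
      rcases (Nat.lt_succ_iff.mp hi).lt_or_eq with hi | rfl
      · rw [Function.update_of_ne (by omega)]
        exact hint i hi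
      · simpa [hk] using hB'B

theorem append {B' C : Set S} {l : ℕ} (h₁ : TileChain T A B k) (h₂ : TileChain T B' C l)
    (h : (B ∩ B').Nonempty) : TileChain T A C (k + 1 + l) := by
  induction l generalizing C with
  | zero =>
    obtain ⟨rfl, hB'⟩ := zero_iff.mp h₂
    exact succ_iff.mpr ⟨B, h₁, hB', h⟩
  | succ l ih =>
    obtain ⟨C', h₂', hC, hC'C⟩ := succ_iff.mp h₂
    exact succ_iff.mpr ⟨C', ih h₂', hC, hC'C⟩

theorem symm (h : TileChain T A B k) : TileChain T B A k := by
  induction k generalizing B with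
  | zero =>
    obtain ⟨rfl, hA⟩ := zero_iff.mp h
    exact refl hA
  | succ k ih =>
    obtain ⟨B', h', hB, hB'B⟩ := succ_iff.mp h
    rw [show k + 1 = 0 + 1 + k by omega]
    exact (refl hB).append (ih h') (Set.inter_comm _ _ ▸ hB'B)

theorem image {S' : Type*} {T' : Set (Set S')} {f : S → S'} (hf : ∀ A ∈ T, f '' A ∈ T')
    (h : TileChain T A B k) : TileChain T' (f '' A) (f '' B) k := by
  induction k generalizing B with
  | zero =>
    obtain ⟨rfl, hA⟩ := zero_iff.mp h
    exact refl (hf A hA)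
  | succ k ih =>
    obtain ⟨B', h', hB, p, hpB', hpB⟩ := succ_iff.mp h
    exact succ_iff.mpr
      ⟨f '' B', ih h', hf B hB, f p, mem_image_of_mem f hpB', mem_image_of_mem f hpB⟩

theorem diam_le [PseudoMetricSpace S] {K : ℝ} (hK : 0 ≤ K)
    (hcomp : ∀ A ∈ T, ∀ B ∈ T, (A ∩ B).Nonempty → diam A ≤ K * diam B)
    (h : TileChain T A B k) : diam B ≤ K ^ k * diam A := by
  induction k generalizing B with
  | zero => simp [(zero_iff.mp h).1]
  | succ k ih =>
    obtain ⟨B', h', hB, hB'B⟩ := succ_iff.mp h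
    calc diam B ≤ K * diam B' := hcomp B hB B' h'.right_mem (Set.inter_comm _ _ ▸ hB'B)
      _ ≤ K * (K ^ k * diam A) := by gcongr; exact ih h'
      _ = K ^ (k + 1) * diam A := by ring

theorem dist_le [PseudoMetricSpace S] {D : ℝ}
    (hbdd : ∀ A ∈ T, Bornology.IsBounded A) (hD : ∀ A ∈ T, A.Nonempty → diam A ≤ D)
    (h : TileChain T A B k) {a b : S} (ha : a ∈ A) (hb : b ∈ B) : dist a b ≤ (k + 1) * D := by
  induction k generalizing B b with
  | zero =>
    obtain ⟨rfl, hA⟩ := zero_iff.mp h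
    simpa using (dist_le_diam_of_mem (hbdd A hA) ha hb).trans (hD A hA ⟨a, ha⟩)
  | succ k ih =>
    obtain ⟨B', h', hB, p, hpB', hpB⟩ := succ_iff.mp h
    calc dist a b ≤ dist a p + dist p b := dist_triangle a p b
      _ ≤ (k + 1) * D + D :=
        add_le_add (ih h' hpB') ((dist_le_diam_of_mem (hbdd B hB) hpB hb).trans (hD B hB ⟨b, hb⟩))
      _ = ((k + 1 : ℕ) + 1) * D := by push_cast; ring

end TileChain

theorem subset_Uw {T : Set (Set S)} {w : ℕ} {A : Set S} (hA : A ∈ T) : A ⊆ Uw T w A :=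
  fun _ hz => ⟨A, ⟨hA, 0, Nat.zero_le _, TileChain.refl hA⟩, hz⟩

theorem exists_tileChain_of_Uw_inter_nonempty {T : Set (Set S)} {w : ℕ} {A B : Set S}
    (h : (Uw T w A ∩ Uw T w B).Nonempty) : ∃ k ≤ 2 * w + 1, TileChain T A B k := by
  obtain ⟨p, ⟨A', ⟨-, k₁, hk₁, hA'⟩, hpA'⟩, ⟨B', ⟨-, k₂, hk₂, hB'⟩, hpB'⟩⟩ := h
  exact ⟨k₁ + 1 + k₂, by omega, hA'.append hB'.symm ⟨p, hpA', hpB'⟩⟩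

theorem exists_le_last_of_zero {P : ℕ → Prop} (h0 : P 0) :
    ∀ N, ∃ l ≤ N, P l ∧ (l < N → ¬P (l + 1))
  | 0 => ⟨0, le_rfl, h0, fun h => absurd h (lt_irrefl 0)⟩
  | N + 1 => by
    by_cases hN : P (N + 1)
    · exact ⟨N + 1, le_rfl, hN, fun h => absurd h (lt_irrefl _)⟩
    · obtain ⟨l, hl, hPl, hmax⟩ := exists_le_last_of_zero h0 N
      refine ⟨l, hl.trans N.le_succ, hPl, fun _ => ?_⟩
      rcases hl.lt_or_eq with h | rfl
      exacts [hmax h, hN]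

theorem pow_rpow_log_div_log {τ ρ : ℝ} (hτ0 : 0 < τ) (hτ1 : τ ≠ 1) (hρ : 0 < ρ) (j : ℕ) :
    (τ ^ j) ^ (Real.log (1 / ρ) / Real.log (1 / τ)) = ρ ^ j := by
  have hlogb : Real.log (1 / ρ) / Real.log (1 / τ) = Real.logb τ ρ := by
    rw [one_div, one_div, Real.log_inv, Real.log_inv, neg_div_neg_eq, Real.logb]
  rw [hlogb, ← Real.rpow_pow_comm hτ0.le, Real.rpow_logb hτ0 hτ1 hρ]

theorem le_mul_rpow_of_le_mul_pow {τ ρ κ M a t : ℝ} {j : ℕ} (hτ0 : 0 < τ) (hτ1 : τ < 1)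
    (hρ0 : 0 < ρ) (hρ1 : ρ < 1) (hκ : 0 < κ) (hM : 0 ≤ M) (ha : a ≤ M * ρ ^ j)
    (ht : κ * τ ^ j ≤ t) :
    a ≤ M * κ⁻¹ ^ (Real.log (1 / ρ) / Real.log (1 / τ)) *
      t ^ (Real.log (1 / ρ) / Real.log (1 / τ)) := by
  have hτν : (τ ^ j) ^ (Real.log (1 / ρ) / Real.log (1 / τ)) = ρ ^ j :=
    pow_rpow_log_div_log hτ0 hτ1.ne hρ0 j
  set ν := Real.log (1 / ρ) / Real.log (1 / τ)
  have hν : 0 ≤ ν := div_nonneg (Real.log_nonneg (by rw [le_div_iff₀ hρ0]; linarith))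
    (Real.log_nonneg (by rw [le_div_iff₀ hτ0]; linarith))
  have ht0 : 0 ≤ t := (by positivity : (0 : ℝ) ≤ κ * τ ^ j).trans ht
  calc a ≤ M * ρ ^ j := ha
    _ = M * (κ⁻¹ * (κ * τ ^ j)) ^ ν := by rw [inv_mul_cancel_left₀ hκ.ne', hτν]
    _ ≤ M * (κ⁻¹ * t) ^ ν := by gcongr
    _ = M * κ⁻¹ ^ ν * t ^ ν := by rw [Real.mul_rpow (by positivity) ht0, mul_assoc]

/-- `prox X w x y` is the supremum of the levels `k` with `UwClose X w x y k`. -/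
def UwClose (X : ℕ → Set (Set S)) (w : ℕ) (x y : S) (k : ℕ) : Prop :=
  ∃ A ∈ X k, ∃ B ∈ X k, x ∈ A ∧ y ∈ B ∧ (Uw (X k) w A ∩ Uw (X k) w B).Nonempty

section UwClose

variable {X : ℕ → Set (Set S)} {w : ℕ} {x y : S} {k : ℕ}

theorem uwClose_zero (hX0 : X 0 = {univ}) (x y : S) : UwClose X w x y 0 := by
  have huniv : univ ∈ X 0 := hX0 ▸ rfl
  exact ⟨univ, huniv, univ, huniv, trivial, trivial,
    x, subset_Uw huniv trivial, subset_Uw huniv trivial⟩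

theorem UwClose.symm (h : UwClose X w x y k) : UwClose X w y x k := by
  obtain ⟨A, hA, B, hB, hx, hy, hUw⟩ := h
  exact ⟨B, hB, A, hA, hy, hx, inter_comm (Uw _ w A) _ ▸ hUw⟩

theorem UwClose.dist_image_le {S' : Type*} [PseudoMetricSpace S'] {T' : Set (Set S')}
    {f : S → S'} {D : ℝ} (hf : ∀ A ∈ X k, f '' A ∈ T') (hbdd : ∀ A ∈ T', Bornology.IsBounded A)
    (hD : ∀ A ∈ T', A.Nonempty → diam A ≤ D) (h : UwClose X w x y k) :
    dist (f x) (f y) ≤ (2 * w + 2) * D := by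
  obtain ⟨A, hA, B, -, hx, hy, hUw⟩ := h
  obtain ⟨j, hj, hAB⟩ := exists_tileChain_of_Uw_inter_nonempty hUw
  have hD0 : 0 ≤ D := diam_nonneg.trans (hD _ (hf A hA) ⟨f x, mem_image_of_mem f hx⟩)
  have hj' : (j : ℝ) ≤ 2 * w + 1 := by exact_mod_cast hj
  calc dist (f x) (f y) ≤ (j + 1) * D :=
        (hAB.image hf).dist_le hbdd hD (mem_image_of_mem f hx) (mem_image_of_mem f hy)
    _ ≤ (2 * w + 2) * D := mul_le_mul_of_nonneg_right (by linarith) hD0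

theorem UwClose.exists_diam_le [PseudoMetricSpace S] {K : ℝ} (hK : 1 ≤ K)
    (hcomp : ∀ A ∈ X k, ∀ B ∈ X k, (A ∩ B).Nonempty → diam A ≤ K * diam B)
    (h : UwClose X w x y k) :
    ∃ A ∈ X k, ∃ B ∈ X k, x ∈ A ∧ y ∈ B ∧ diam B ≤ K ^ (2 * w + 1) * diam A := by
  obtain ⟨A, hA, B, hB, hx, hy, hUw⟩ := h
  obtain ⟨j, hj, hAB⟩ := exists_tileChain_of_Uw_inter_nonempty hUw
  refine ⟨A, hA, B, hB, hx, hy, (hAB.diam_le (by linarith) hcomp).trans ?_⟩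
  gcongr

theorem diam_le_mul_dist_of_not_uwClose [PseudoMetricSpace S] {K : ℝ} (hcov : ⋃₀ X k = univ)
    (hsep : ∀ A ∈ X k, ∀ B ∈ X k, Uw (X k) w A ∩ Uw (X k) w B = ∅ →
      ∀ a ∈ A, ∀ b ∈ B, diam A ≤ K * dist a b)
    (h : ¬UwClose X w x y k) {A : Set S} (hA : A ∈ X k) (hx : x ∈ A) :
    diam A ≤ K * dist x y := by
  obtain ⟨B, hB, hy⟩ := sUnion_eq_univ_iff.mp hcov y
  refine hsep A hA B hB ?_ x hx y hy
  rw [← not_nonempty_iff_eq_empty]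
  exact fun hUw => h ⟨A, hA, B, hB, hx, hy, hUw⟩

end UwClose

theorem iterate_image_mem {X : ℕ → Set (Set S)} {g : S → S}
    (hdyn : ∀ n : ℕ, 1 ≤ n → ∀ A ∈ X (n + 1), g '' A ∈ X n) :
    ∀ (t : ℕ) {M : ℕ} {A : Set S}, 1 ≤ M → A ∈ X (M + t) → g^[t] '' A ∈ X M
  | 0, _, _, _, hA => by simpa using hA
  | t + 1, M, A, hM, hA => by
    rw [Function.iterate_succ', image_comp]
    exact hdyn M hM _ (iterate_image_mem hdyn t (by omega) (by rwa [add_right_comm, add_assoc]))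

def TileDiamLowerBound [PseudoMetricSpace S] (X : ℕ → Set (Set S)) (τ : ℝ) : Prop :=
  ∀ n k : ℕ, ∀ A ∈ X n, ∀ B ∈ X (n + k), (A ∩ B).Nonempty → τ ^ k * diam A ≤ diam B

def TileDiamUpperBound [PseudoMetricSpace S] (X : ℕ → Set (Set S)) (C₀ ρ : ℝ) : Prop :=
  ∀ n k : ℕ, ∀ A ∈ X n, ∀ B ∈ X (n + k), (A ∩ B).Nonempty → diam B ≤ C₀ * ρ ^ k * diam A

section Decay

variable [PseudoMetricSpace S] {X : ℕ → Set (Set S)} {w : ℕ} {τ ρ C₀ K R : ℝ} {N m n k l : ℕ}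
  {x y z : S} {A B W Z : Set S}

theorem pow_sub_mul_diam_le (hlow : TileDiamLowerBound X τ) (hA : A ∈ X n) (hB : B ∈ X k)
    (hnk : n ≤ k) (hAB : (A ∩ B).Nonempty) :
    τ ^ (k - n) * diam A ≤ diam B :=
  hlow n (k - n) A hA B (by rwa [Nat.add_sub_cancel' hnk]) hAB

theorem diam_le_mul_diam_of_le (hC₀ : 0 ≤ C₀) (hρ0 : 0 ≤ ρ) (hρ1 : ρ ≤ 1)
    (hupp : TileDiamUpperBound X C₀ ρ) (hA : A ∈ X n) (hB : B ∈ X k) (hnk : n ≤ k)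
    (hAB : (A ∩ B).Nonempty) :
    diam B ≤ C₀ * diam A := by
  calc diam B ≤ C₀ * ρ ^ (k - n) * diam A :=
        hupp n (k - n) A hA B (by rwa [Nat.add_sub_cancel' hnk]) hAB
    _ ≤ C₀ * 1 * diam A := by gcongr; exact pow_le_one₀ hρ0 hρ1
    _ = C₀ * diam A := by rw [mul_one]

theorem diam_le_of_mem (hX0 : X 0 = {univ}) (hupp : TileDiamUpperBound X C₀ ρ) (hA : A ∈ X k)
    (hne : A.Nonempty) : diam A ≤ C₀ * ρ ^ k * diam (univ : Set S) :=
  hupp 0 k univ (hX0 ▸ rfl) A (by rwa [zero_add]) (by rwa [univ_inter])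

theorem UwClose.pow_sub_mul_diam_le_of_mem (hK : 1 ≤ K) (hC₀ : 0 ≤ C₀) (hτ0 : 0 ≤ τ)
    (hρ0 : 0 ≤ ρ) (hρ1 : ρ ≤ 1)
    (hcomp : ∀ A ∈ X l, ∀ B ∈ X l, (A ∩ B).Nonempty → diam A ≤ K * diam B)
    (hlow : TileDiamLowerBound X τ) (hupp : TileDiamUpperBound X C₀ ρ)
    (h : UwClose X w x z l) (hlk : l ≤ k) (hW : W ∈ X k) (hxW : x ∈ W) (hZ : Z ∈ X k)
    (hzZ : z ∈ Z) : τ ^ (k - l) * diam Z ≤ C₀ * K ^ (2 * w + 1) * diam W := by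
  obtain ⟨A, hA, B, hB, hxA, hzB, hBA⟩ := h.exists_diam_le hK hcomp
  have hZB : diam Z ≤ C₀ * diam B :=
    diam_le_mul_diam_of_le hC₀ hρ0 hρ1 hupp hB hZ hlk ⟨z, hzB, hzZ⟩
  have hAW : τ ^ (k - l) * diam A ≤ diam W := pow_sub_mul_diam_le hlow hA hW hlk ⟨x, hxA, hxW⟩
  calc τ ^ (k - l) * diam Z ≤ τ ^ (k - l) * (C₀ * (K ^ (2 * w + 1) * diam A)) := by
        gcongr
        exact hZB.trans (by gcongr)
    _ = C₀ * K ^ (2 * w + 1) * (τ ^ (k - l) * diam A) := by ring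
    _ ≤ C₀ * K ^ (2 * w + 1) * diam W := by gcongr

theorem pow_mul_diam_le_of_mem_ball (hK : 1 ≤ K) (hC₀ : 0 ≤ C₀) (hτ0 : 0 ≤ τ) (hτ1 : τ ≤ 1)
    (hρ0 : 0 ≤ ρ) (hρ1 : ρ ≤ 1) (hR : 0 < R) (hN : ρ ^ N * (C₀ * K * R) < 1)
    (hcov : ∀ n, ⋃₀ X n = univ) (hX0 : X 0 = {univ})
    (hcomp : ∀ n, ∀ A ∈ X n, ∀ B ∈ X n, (A ∩ B).Nonempty → diam A ≤ K * diam B)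
    (hsep : ∀ n, ∀ A ∈ X n, ∀ B ∈ X n, Uw (X n) w A ∩ Uw (X n) w B = ∅ →
      ∀ a ∈ A, ∀ b ∈ B, diam A ≤ K * dist a b)
    (hlow : TileDiamLowerBound X τ) (hupp : TileDiamUpperBound X C₀ ρ)
    (hZ : Z ∈ X k) (hzZ : z ∈ Z) (hx : x ∈ ball z (R * diam Z)) (hW : W ∈ X k) (hxW : x ∈ W) :
    τ ^ N * diam Z ≤ C₀ * K ^ (2 * w + 1) * diam W := by
  obtain ⟨l, hlk, hl, hmax⟩ := exists_le_last_of_zero (uwClose_zero (w := w) hX0 x z) k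
  have hgap : k - l ≤ N := by
    rcases hlk.lt_or_eq with hlk | rfl
    · by_contra! hNk
      obtain ⟨B, hB, hzB⟩ := sUnion_eq_univ_iff.mp (hcov (l + 1)) z
      have hBx : diam B ≤ K * dist z x :=
        diam_le_mul_dist_of_not_uwClose (hcov _) (hsep _) (fun h => hmax hlk h.symm) hB hzB
      have hZB : diam Z ≤ C₀ * ρ ^ (k - (l + 1)) * diam B :=
        hupp (l + 1) _ B hB Z (by rwa [Nat.add_sub_cancel' hlk]) ⟨z, hzB, hzZ⟩
      have hD : 0 < diam Z := pos_of_mul_pos_right (dist_nonneg.trans_lt hx) hR.le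
      have hxz : dist z x ≤ R * diam Z := (mem_ball'.mp hx).le
      have : diam Z < diam Z := calc
        diam Z ≤ C₀ * ρ ^ (k - (l + 1)) * (K * dist z x) := hZB.trans (by gcongr)
        _ ≤ C₀ * ρ ^ N * (K * (R * diam Z)) := by
          have hρN : ρ ^ (k - (l + 1)) ≤ ρ ^ N := pow_le_pow_of_le_one hρ0 hρ1 (by omega)
          gcongr
        _ = ρ ^ N * (C₀ * K * R) * diam Z := by ring
        _ < 1 * diam Z := by gcongr
        _ = diam Z := one_mul _
      exact lt_irrefl _ this
    · simp
  calc τ ^ N * diam Z ≤ τ ^ (k - l) * diam Z :=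
        mul_le_mul_of_nonneg_right (pow_le_pow_of_le_one hτ0 hτ1 hgap) diam_nonneg
    _ ≤ C₀ * K ^ (2 * w + 1) * diam W :=
        hl.pow_sub_mul_diam_le_of_mem hK hC₀ hτ0 hρ0 hρ1 (hcomp l) hlow hupp hlk hW hxW hZ hzZ

theorem mul_pow_sub_le_dist_div_diam (hK : 1 ≤ K) (hC₀ : 1 ≤ C₀)
    (hτ0 : 0 ≤ τ) (hτ1 : τ ≤ 1) (hρ0 : 0 ≤ ρ) (hρ1 : ρ ≤ 1) (hR : 0 < R)
    (hN : ρ ^ N * (C₀ * K * R) < 1)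
    (hcov : ∀ n, ⋃₀ X n = univ) (hX0 : X 0 = {univ})
    (hcomp : ∀ n, ∀ A ∈ X n, ∀ B ∈ X n, (A ∩ B).Nonempty → diam A ≤ K * diam B)
    (hsep : ∀ n, ∀ A ∈ X n, ∀ B ∈ X n, Uw (X n) w A ∩ Uw (X n) w B = ∅ →
      ∀ a ∈ A, ∀ b ∈ B, diam A ≤ K * dist a b)
    (hlow : TileDiamLowerBound X τ) (hupp : TileDiamUpperBound X C₀ ρ)
    (hZ : Z ∈ X (n + 1)) (hzZ : z ∈ Z) (hx : x ∈ ball z (R * diam Z))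
    (hm : ¬UwClose X w x y (m + 1)) :
    τ ^ N / (C₀ ^ 2 * K ^ (2 * w + 2)) * τ ^ (m - n) ≤ dist x y / diam Z := by
  have hD : 0 < diam Z := pos_of_mul_pos_right (dist_nonneg.trans_lt hx) hR.le
  rw [le_div_iff₀ hD, div_mul_eq_mul_div, div_mul_eq_mul_div, div_le_iff₀ (by positivity)]
  obtain ⟨A, hA, hxA⟩ := sUnion_eq_univ_iff.mp (hcov (m + 1)) x
  obtain ⟨W, hW, hxW⟩ := sUnion_eq_univ_iff.mp (hcov (n + 1)) x
  have hAxy : diam A ≤ K * dist x y := diam_le_mul_dist_of_not_uwClose (hcov _) (hsep _) hm hA hxA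
  have hWZ : τ ^ N * diam Z ≤ C₀ * K ^ (2 * w + 1) * diam W :=
    pow_mul_diam_le_of_mem_ball hK (by linarith) hτ0 hτ1 hρ0 hρ1 hR hN hcov hX0 hcomp hsep hlow
      hupp hZ hzZ hx hW hxW
  rcases le_or_gt n m with hnm | hmn
  · have hWA : τ ^ (m - n) * diam W ≤ diam A :=
      Nat.add_sub_add_right m 1 n ▸ pow_sub_mul_diam_le hlow hW hA (by omega) ⟨x, hxW, hxA⟩
    calc τ ^ N * τ ^ (m - n) * diam Z = τ ^ (m - n) * (τ ^ N * diam Z) := by ring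
      _ ≤ τ ^ (m - n) * (C₀ * K ^ (2 * w + 1) * diam W) := by gcongr
      _ = C₀ * K ^ (2 * w + 1) * (τ ^ (m - n) * diam W) := by ring
      _ ≤ C₀ * K ^ (2 * w + 1) * (K * dist x y) :=
          mul_le_mul_of_nonneg_left (hWA.trans hAxy) (by positivity)
      _ = dist x y * (C₀ * K ^ (2 * w + 2)) := by ring
      _ ≤ dist x y * (C₀ ^ 2 * K ^ (2 * w + 2)) := by gcongr; nlinarith
  · have hWA : diam W ≤ C₀ * diam A :=
      diam_le_mul_diam_of_le (by linarith) hρ0 hρ1 hupp hA hW (by omega) ⟨x, hxA, hxW⟩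
    rw [Nat.sub_eq_zero_of_le hmn.le, pow_zero, mul_one]
    calc τ ^ N * diam Z ≤ C₀ * K ^ (2 * w + 1) * diam W := hWZ
      _ ≤ C₀ * K ^ (2 * w + 1) * (C₀ * (K * dist x y)) := by gcongr; exact hWA.trans (by gcongr)
      _ = dist x y * (C₀ ^ 2 * K ^ (2 * w + 2)) := by ring

end Decay

section Distortion

open Filter Topology

variable [MetricSpace S] [BoundedSpace S] {X : ℕ → Set (Set S)} {w : ℕ} {ρ C₀ : ℝ} {x y : S}

theorem exists_uwClose_not_uwClose_succ (hX0 : X 0 = {univ})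
    (hupp : TileDiamUpperBound X C₀ ρ) (hρ0 : 0 ≤ ρ) (hρ1 : ρ < 1) (hxy : x ≠ y) :
    ∃ m, UwClose X w x y m ∧ ¬UwClose X w x y (m + 1) := by
  have hlim : Tendsto (fun k => (2 * w + 2) * (C₀ * ρ ^ k * diam (univ : Set S))) atTop (𝓝 0) := by
    simpa using (((tendsto_pow_atTop_nhds_zero_of_lt_one hρ0 hρ1).const_mul C₀).mul_const
      (diam (univ : Set S))).const_mul (2 * (w : ℝ) + 2)
  obtain ⟨N, hN⟩ := (hlim.eventually (gt_mem_nhds (dist_pos.mpr hxy))).exists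
  have hfar : ¬UwClose X w x y N := fun h => hN.not_ge <| by
    simpa using h.dist_image_le (f := id) (fun A hA => by rwa [image_id])
      (fun A _ => Bornology.IsBounded.all A) (fun A hA => diam_le_of_mem hX0 hupp hA)
  obtain ⟨m, hmN, hm, hmax⟩ := exists_le_last_of_zero (uwClose_zero hX0 x y) N
  exact ⟨m, hm, hmax (hmN.lt_of_ne (by rintro rfl; exact hfar hm))⟩

theorem dist_iterate_le_of_uwClose {g : S → S} {m : ℕ} (hC₀ : 1 ≤ C₀) (hX0 : X 0 = {univ})
    (hdyn : ∀ n : ℕ, 1 ≤ n → ∀ A ∈ X (n + 1), g '' A ∈ X n)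
    (hupp : TileDiamUpperBound X C₀ ρ) (h : UwClose X w x y m) (n : ℕ) :
    dist (g^[n] x) (g^[n] y) ≤ (2 * w + 2) * (C₀ * ρ ^ (m - n) * diam (univ : Set S)) := by
  rcases le_or_gt m n with hmn | hnm
  · have hdiam : 0 ≤ diam (univ : Set S) := diam_nonneg
    rw [Nat.sub_eq_zero_of_le hmn, pow_zero, mul_one]
    calc dist (g^[n] x) (g^[n] y) ≤ 1 * (1 * diam (univ : Set S)) := by
          simpa using dist_le_diam_of_mem (Bornology.IsBounded.all univ) trivial trivial
      _ ≤ (2 * w + 2) * (C₀ * diam (univ : Set S)) := by gcongr; linarith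
  · refine h.dist_image_le (fun A hA => iterate_image_mem hdyn n (by omega) ?_)
      (fun A _ => Bornology.IsBounded.all A) (fun A hA => diam_le_of_mem hX0 hupp hA)
    rwa [Nat.sub_add_cancel hnm.le]

end Distortion

theorem stmt19_general (S : Type*) [MetricSpace S]
    (hb : Bornology.IsBounded (Set.univ : Set S))
    (g : S → S) (X : ℕ → Set (Set S)) (w : ℕ)
    (hqva : IsQVA X w)
    (hdyn : ∀ n : ℕ, 1 ≤ n → ∀ A ∈ X (n + 1), g '' A ∈ X n)
    (τ ρ C₀ : ℝ) (hτ0 : 0 < τ) (hτ1 : τ < 1) (hρ0 : 0 < ρ) (hρ1 : ρ < 1) (hC₀ : 1 ≤ C₀)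
    (hlow : ∀ n k : ℕ, ∀ A ∈ X n, ∀ B ∈ X (n + k), (A ∩ B).Nonempty →
      τ ^ k * Metric.diam A ≤ Metric.diam B)
    (hupp : ∀ n k : ℕ, ∀ A ∈ X n, ∀ B ∈ X (n + k), (A ∩ B).Nonempty →
      Metric.diam B ≤ C₀ * ρ ^ k * Metric.diam A) :
    ∀ R : ℝ, 0 < R → ∃ C : ℝ, 1 ≤ C ∧
      ∀ n : ℕ, 1 ≤ n → ∀ Z ∈ X (n + 1), ∀ z₀ ∈ Z,
        ∀ x ∈ Metric.ball z₀ (R * Metric.diam Z),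
        ∀ y ∈ Metric.ball z₀ (R * Metric.diam Z),
          dist (g^[n] x) (g^[n] y) ≤
            C * (dist x y / Metric.diam Z) ^ (Real.log (1 / ρ) / Real.log (1 / τ)) := by
  intro R hR
  obtain ⟨hcov, hX0, ⟨K, hK, hcomp, hsep, -⟩, -⟩ := hqva
  have : BoundedSpace S := ⟨hb⟩
  obtain ⟨N, hN⟩ : ∃ N : ℕ, ρ ^ N * (C₀ * K * R) < 1 := by
    have hCKR : 0 < C₀ * K * R := by positivity
    obtain ⟨N, hN⟩ := exists_pow_lt_of_lt_one (one_div_pos.mpr hCKR) hρ1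
    exact ⟨N, (lt_div_iff₀ hCKR).mp hN⟩
  set ν := Real.log (1 / ρ) / Real.log (1 / τ)
  set κ := τ ^ N / (C₀ ^ 2 * K ^ (2 * w + 2))
  set M := (2 * w + 2) * (C₀ * diam (univ : Set S))
  refine ⟨max 1 (M * κ⁻¹ ^ ν), le_max_left _ _, fun n _ Z hZ z hz x hx y hy => ?_⟩
  rcases eq_or_ne x y with rfl | hxy
  · rw [dist_self, dist_self]
    positivity
  obtain ⟨m, hm, hm'⟩ := exists_uwClose_not_uwClose_succ hX0 hupp hρ0.le hρ1 hxy
  have hupper : dist (g^[n] x) (g^[n] y) ≤ M * ρ ^ (m - n) :=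
    (dist_iterate_le_of_uwClose hC₀ hX0 hdyn hupp hm n).trans_eq (by ring)
  have hlower : κ * τ ^ (m - n) ≤ dist x y / diam Z :=
    mul_pow_sub_le_dist_div_diam hK hC₀ hτ0.le hτ1.le hρ0.le hρ1.le hR hN hcov hX0 hcomp hsep
      hlow hupp hZ hz hx hm'
  calc dist (g^[n] x) (g^[n] y) ≤ M * κ⁻¹ ^ ν * (dist x y / diam Z) ^ ν :=
        le_mul_rpow_of_le_mul_pow hτ0 hτ1 hρ0 hρ1 (by positivity) (by positivity) hupper hlower
    _ ≤ max 1 (M * κ⁻¹ ^ ν) * (dist x y / diam Z) ^ ν := by gcongr; exact le_max_right _ _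

/-- Distortion estimate for a dynamical quasi-visual approximation: with constants
`τ, ρ ∈ (0,1)` controlling the diameters of intersecting tiles across levels and
`ν = log(1/ρ)/log(1/τ)`, for each `R > 0` there is `C = C(R) ≥ 1` such that
`d(gⁿ(x), gⁿ(y)) ≤ C·(d(x,y)/diam(Z^{n+1}))^ν` whenever `Z^{n+1} ∈ X^{n+1}`,
`z₀ ∈ Z^{n+1}`, and `x, y ∈ B(z₀, R·diam(Z^{n+1}))`. -/
theorem stmt19 (S : Type*) [MetricSpace S]
    (hb : Bornology.IsBounded (Set.univ : Set S))
    (hpts : ∃ p q : S, p ≠ q)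
    (g : S → S) (X : ℕ → Set (Set S)) (w : ℕ)
    (hqva : IsQVA X w)
    (hdyn : ∀ n : ℕ, 1 ≤ n → ∀ A ∈ X (n + 1), g '' A ∈ X n)
    (τ ρ C₀ : ℝ) (hτ0 : 0 < τ) (hτ1 : τ < 1) (hρ0 : 0 < ρ) (hρ1 : ρ < 1) (hC₀ : 1 ≤ C₀)
    (hlow : ∀ n k : ℕ, ∀ A ∈ X n, ∀ B ∈ X (n + k), (A ∩ B).Nonempty →
      τ ^ k * Metric.diam A ≤ Metric.diam B)
    (hupp : ∀ n k : ℕ, ∀ A ∈ X n, ∀ B ∈ X (n + k), (A ∩ B).Nonempty →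
      Metric.diam B ≤ C₀ * ρ ^ k * Metric.diam A) :
    ∀ R : ℝ, 0 < R → ∃ C : ℝ, 1 ≤ C ∧
      ∀ n : ℕ, 1 ≤ n → ∀ Z ∈ X (n + 1), ∀ z₀ ∈ Z,
        ∀ x ∈ Metric.ball z₀ (R * Metric.diam Z),
        ∀ y ∈ Metric.ball z₀ (R * Metric.diam Z),
          dist (g^[n] x) (g^[n] y) ≤
            C * (dist x y / Metric.diam Z) ^ (Real.log (1 / ρ) / Real.log (1 / τ)) :=
  stmt19_general S hb g X w hqva hdyn τ ρ C₀ hτ0 hτ1 hρ0 hρ1 hC₀ hlow hupp
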